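/- If P is a pseudoadditive (abelian group)-valued k-functor, then P is a sheaf for the fpqc topology. -/

import Mathlib

universe u

open TensorProduct

/-- An (abelian group)-valued `k`-functor: a functor from commutative `k`-algebras
(in universe `u`) to abelian groups. -/
structure AbFunctor (k : Type u) [Field k] : Type (u + 1) where
  obj : ∀ (B : Type u) [CommRing B] [Algebra k B], Type u
  [grp : ∀ (B : Type u) [CommRing B] [Algebra k B], AddCommGroup (obj B)]
  map : ∀ {B C : Type u} [CommRing B] [Algebra k B] [CommRing C] [Algebra k C],
    (B →ₐ[k] C) → (obj B →+ obj C)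
  map_id : ∀ (B : Type u) [CommRing B] [Algebra k B],
    map (AlgHom.id k B) = AddMonoidHom.id (obj B)
  map_comp : ∀ {B C D : Type u} [CommRing B] [Algebra k B] [CommRing C] [Algebra k C]
    [CommRing D] [Algebra k D] (f : B →ₐ[k] C) (g : C →ₐ[k] D),
    map (g.comp f) = (map g).comp (map f)

attribute [instance] AbFunctor.grp

variable (k : Type u) [Field k]

/-- A morphism of (abelian group)-valued `k`-functors. -/
structure AbHom (F G : AbFunctor k) where
  app : ∀ (B : Type u) [CommRing B] [Algebra k B], F.obj B →+ G.obj B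
  naturality : ∀ {B C : Type u} [CommRing B] [Algebra k B] [CommRing C] [Algebra k C]
    (f : B →ₐ[k] C) (x : F.obj B), G.map f (app B x) = app C (F.map f x)

/-- A natural transformation of the underlying set-valued functors
(not required to be additive). -/
structure SetHom (F G : AbFunctor k) where
  app : ∀ (B : Type u) [CommRing B] [Algebra k B], F.obj B → G.obj B
  naturality : ∀ {B C : Type u} [CommRing B] [Algebra k B] [CommRing C] [Algebra k C]
    (f : B →ₐ[k] C) (x : F.obj B), G.map f (app B x) = app C (F.map f x)

/-- An isomorphism of (abelian group)-valued `k`-functors. -/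
structure AbIso (F G : AbFunctor k) where
  hom : AbHom k F G
  inv : AbHom k G F
  hom_inv : ∀ (B : Type u) [CommRing B] [Algebra k B] (x : F.obj B),
    inv.app B (hom.app B x) = x
  inv_hom : ∀ (B : Type u) [CommRing B] [Algebra k B] (x : G.obj B),
    hom.app B (inv.app B x) = x
/-- `𝔾_a^ι`, the direct sum of `ι` copies of the additive group functor,
`B ↦ ⊕_{i : ι} (B, +)`. -/
noncomputable def Ga (ι : Type u) : AbFunctor k where
  obj B _ _ := ι →₀ B
  grp B _ _ := inferInstance
  map f := Finsupp.mapRange.addMonoidHom f.toRingHom.toAddMonoidHom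
  map_id B _ _ := by
    ext x i
    simp [Finsupp.mapRange.addMonoidHom]
  map_comp f g := by
    ext x i
    simp only [AddMonoidHom.coe_comp, Function.comp_apply,
      Finsupp.mapRange.addMonoidHom_apply, Finsupp.mapRange_single,
      Finsupp.singleAddHom_apply]
    rfl
/-- A functor is strictly additive if it is isomorphic to `𝔾_a^α` for some
`α ∈ {0, 1, …, ∞}`. -/
def IsStrictlyAdditive (F : AbFunctor k) : Prop :=
  (∃ n : ℕ, Nonempty (AbIso k F (Ga k (ULift.{u} (Fin n))))) ∨
    Nonempty (AbIso k F (Ga k (ULift.{u} ℕ)))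
/-- `0 → F' → F → F'' → 0` is a short exact sequence of (abelian group)-valued
`k`-functors (exactness is objectwise). -/
structure IsShortExact {F' F F'' : AbFunctor k} (i : AbHom k F' F)
    (p : AbHom k F F'') : Prop where
  inj : ∀ (B : Type u) [CommRing B] [Algebra k B], Function.Injective (i.app B)
  surj : ∀ (B : Type u) [CommRing B] [Algebra k B], Function.Surjective (p.app B)
  exact : ∀ (B : Type u) [CommRing B] [Algebra k B] (x : F.obj B),
    p.app B x = 0 ↔ x ∈ Set.range (i.app B)
/-- A functor is additive if it admits a finite filtration with strictly additive
successive quotients; equivalently (and as formalized here), the class of additive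
functors is the smallest class containing the strictly additive functors and closed
under extensions with strictly additive quotients. -/
inductive IsAdditive : AbFunctor k → Prop
  | of_strict (F : AbFunctor k) : IsStrictlyAdditive k F → IsAdditive F
  | of_ext {F' F F'' : AbFunctor k} (i : AbHom k F' F) (p : AbHom k F F'') :
      IsShortExact k i p → IsAdditive F' → IsStrictlyAdditive k F'' → IsAdditive F
/-- A functor `P` is pseudoadditive if for some `n` there is an exact sequence
`0 → U_1 → ⋯ → U_n → P → 0` with all `U_i` additive; formalized by splicing:
either `P` is additive, or `P` is a quotient of an additive functor by a
pseudoadditive subfunctor. -/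
inductive IsPseudoadditive : AbFunctor k → Prop
  | of_additive (P : AbFunctor k) : IsAdditive k P → IsPseudoadditive P
  | of_ext {K U P : AbFunctor k} (i : AbHom k K U) (p : AbHom k U P) :
      IsShortExact k i p → IsPseudoadditive K → IsAdditive k U → IsPseudoadditive P
section TensorIncl

variable {B C : Type u} [CommRing B] [Algebra k B] [CommRing C] [Algebra k C]
  [Algebra B C] [IsScalarTower k B C]

/-- `c ↦ c ⊗ 1 : C → C ⊗_B C`, as a `k`-algebra homomorphism. -/
noncomputable def tensorIncl₁ : C →ₐ[k] C ⊗[B] C :=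
  Algebra.TensorProduct.includeLeft

/-- `c ↦ 1 ⊗ c : C → C ⊗_B C`, as a `k`-algebra homomorphism. -/
noncomputable def tensorIncl₂ : C →ₐ[k] C ⊗[B] C :=
  (Algebra.TensorProduct.includeRight (R := B) (A := C) (B := C)).restrictScalars k

end TensorIncl

/-- A functor is a sheaf for the fpqc topology if for every faithfully flat
homomorphism `B → C` of commutative `k`-algebras, `F(B)` is exactly the equalizer of
the two maps `F(C) ⇉ F(C ⊗_B C)` induced by `c ↦ c ⊗ 1` and `c ↦ 1 ⊗ c`. -/
def IsFpqcSheaf (F : AbFunctor k) : Prop :=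
  ∀ (B C : Type u) [CommRing B] [Algebra k B] [CommRing C] [Algebra k C]
    [Algebra B C] [IsScalarTower k B C], Module.FaithfullyFlat B C →
    Function.Injective (F.map (IsScalarTower.toAlgHom k B C)) ∧
    Set.range (F.map (IsScalarTower.toAlgHom k B C)) =
      { x : F.obj C |
        F.map (tensorIncl₁ k (B := B) (C := C)) x
          = F.map (tensorIncl₂ k (B := B) (C := C)) x }

/-!
For a faithfully flat `B → C`, consider the augmented Amitsur complex
`0 → F(B) → F(C) → F(C ⊗_B C) → ⋯` with the alternating sums of the coface maps as
differentials; the sheaf condition is its exactness in the two lowest degrees. For `𝔾_a^α` the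
complex is, coordinatewise, the Amitsur complex `B → C → C ⊗_B C → ⋯` of `B`-modules itself. After
the faithfully flat base change `- ⊗_B C` that complex acquires a contracting homotopy
(multiply the first tensor factor into the last one), so it is exact in every degree.
Exactness in every degree is inherited by isomorphic functors and by extensions (middle terms of
short exact sequences), and passes from `K` and `U` to `P` in `0 → K → U → P → 0` through the
connecting map, at the cost of one degree of `K`: this is why all degrees are carried along.
-/

open Finset

theorem sum_range_sum_range_neg_one_pow_smul_eq_zero {M : Type*} [AddCommGroup M] (n : ℕ)
    (g : ℕ → ℕ → M) (hg : ∀ i j, i ≤ j → j ≤ n → g (j + 1) i = g i j) :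
    ∑ j ∈ range (n + 2), ∑ i ∈ range (n + 1), (-1 : ℤ) ^ (i + j) • g j i = 0 := by
  rw [← sum_product']
  -- the term at `(j, i)` with `i < j` cancels the one at `(i, j - 1)`
  refine sum_involution (fun p _ => if p.2 < p.1 then (p.2, p.1 - 1) else (p.2 + 1, p.1))
    ?_ ?_ ?_ ?_
  · rintro ⟨j, i⟩ hp
    simp only [mem_product, mem_range] at hp
    dsimp only
    split_ifs with h
    · obtain ⟨j, rfl⟩ : ∃ j', j = j' + 1 := ⟨j - 1, by omega⟩
      rw [Nat.add_sub_cancel, hg i j (by omega) (by omega), show i + (j + 1) = j + i + 1 by omega,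
        pow_succ, mul_neg_one, neg_smul, neg_add_cancel]
    · rw [hg j i (by omega) (by omega), show j + (i + 1) = i + j + 1 by omega, pow_succ,
        mul_neg_one, neg_smul, add_neg_cancel]
  · rintro ⟨j, i⟩ _ _
    split_ifs <;> simp only [ne_eq, Prod.mk.injEq] <;> omega
  · rintro ⟨j, i⟩ hp
    simp only [mem_product, mem_range] at hp ⊢
    split_ifs <;> omega
  · rintro ⟨j, i⟩ _
    by_cases h : i < j
    · simp only [h, if_true, show ¬ j - 1 < i by omega, if_false]
      exact Prod.ext (by omega) rfl
    · simp [h]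

theorem mul'_rTensor_linearMap_apply (R A : Type*) [CommSemiring R] [CommSemiring A]
    [Algebra R A] (y : R ⊗[R] A) :
    LinearMap.mul' R A (LinearMap.rTensor A (Algebra.linearMap R A) y) =
      TensorProduct.lid R A y := by
  induction y with
  | zero => simp
  | add a b ha hb => simp only [map_add, ha, hb]
  | tmul r a => simp [Algebra.smul_def]

structure TowerAlgebra (R B : Type u) [CommSemiring R] [CommRing B] [Algebra R B] :
    Type (u + 1) where
  carrier : Type u
  [commRing : CommRing carrier]
  [algebra₁ : Algebra R carrier]
  [algebra₂ : Algebra B carrier]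
  [isScalarTower : IsScalarTower R B carrier]

attribute [instance] TowerAlgebra.commRing TowerAlgebra.algebra₁ TowerAlgebra.algebra₂
  TowerAlgebra.isScalarTower

namespace Amitsur

variable {R B C : Type u} [CommSemiring R] [CommRing B] [Algebra R B] [CommRing C]
  [Algebra R C] [Algebra B C] [IsScalarTower R B C]

section Cosimplicial

variable (R B C) in
/-- `C^{⊗n}` over `B`, with `C^{⊗0} = B`, `C^{⊗1} = C` and new factors added on the left. -/
noncomputable def tensorPowTower : ℕ → TowerAlgebra R B
  | 0 => ⟨B⟩
  | 1 => ⟨C⟩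
  | n + 2 => ⟨C ⊗[B] (tensorPowTower (n + 1)).carrier⟩

variable (R B C) in
abbrev tensorPow (n : ℕ) : Type u := (tensorPowTower R B C n).carrier

/-- `coface n i` inserts `1` as the `i`-th tensor factor (for `i ≤ n`). -/
noncomputable def coface : (n : ℕ) → ℕ → (tensorPow R B C n →ₐ[B] tensorPow R B C (n + 1))
  | 0, _ => Algebra.ofId B C
  | _ + 1, 0 => Algebra.TensorProduct.includeRight
  | 1, _ + 1 => Algebra.TensorProduct.includeLeft (R := B) (S := B) (A := C) (B := C)
  | n + 2, i + 1 => Algebra.TensorProduct.map (AlgHom.id B C) (coface (n + 1) i)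

theorem coface_comp_coface {n i j : ℕ} (hij : i ≤ j) (hjn : j ≤ n) :
    (coface (R := R) (B := B) (C := C) (n + 1) (j + 1)).comp (coface n i) =
      (coface (n + 1) i).comp (coface n j) := by
  induction n generalizing i j with
  | zero =>
    obtain rfl : i = 0 := by omega
    obtain rfl : j = 0 := by omega
    ext
  | succ n ih =>
    rcases n with _ | n
    · interval_cases j <;> interval_cases i <;> (ext; rfl)
    rcases i with _ | i
    · ext
      rfl
    obtain ⟨j, rfl⟩ : ∃ j', j = j' + 1 := ⟨j - 1, by omega⟩
    exact (Algebra.TensorProduct.map_comp _ _ _ _).symm.trans <|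
      (congrArg _ (ih (Nat.le_of_succ_le_succ hij) (by omega))).trans
        (Algebra.TensorProduct.map_comp _ _ _ _)

variable (R B C) in
noncomputable def diff (n : ℕ) : tensorPow R B C n →ₗ[B] tensorPow R B C (n + 1) :=
  ∑ i ∈ range (n + 1), (-1 : ℤ) ^ i • (coface n i).toLinearMap

theorem diff_apply (n : ℕ) (x : tensorPow R B C n) :
    diff R B C n x = ∑ i ∈ range (n + 1), (-1 : ℤ) ^ i • coface n i x := by
  simp [diff, LinearMap.sum_apply]

theorem diff_zero : diff R B C 0 = (coface 0 0).toLinearMap := by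
  simp [diff]

theorem diff_comp_diff (n : ℕ) : diff R B C (n + 1) ∘ₗ diff R B C n = 0 := by
  ext x
  simp only [LinearMap.comp_apply, diff_apply, map_sum, map_zsmul, smul_sum, smul_smul,
    ← pow_add, LinearMap.zero_apply]
  rw [sum_comm]
  exact sum_range_sum_range_neg_one_pow_smul_eq_zero n _ fun i j hij hjn =>
    AlgHom.congr_fun (coface_comp_coface hij hjn) x

end Cosimplicial

section Contraction

open LinearMap

variable (R B C) in
/-- `(c₀ ⊗ x) ⊗ c ↦ x ⊗ c₀ c`, and `c₀ ⊗ c ↦ 1 ⊗ c₀ c` in the lowest degree. -/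
noncomputable def contraction :
    (n : ℕ) → tensorPow R B C (n + 1) ⊗[B] C →ₗ[B] tensorPow R B C n ⊗[B] C
  | 0 => (TensorProduct.lid B C).symm.toLinearMap ∘ₗ mul' B C
  | _ + 1 => lTensor _ (mul' B C) ∘ₗ (TensorProduct.assoc B _ C C).toLinearMap ∘ₗ
      rTensor C (TensorProduct.comm B C _).toLinearMap

theorem contraction_rTensor_coface_zero (n : ℕ) (y : tensorPow R B C n ⊗[B] C) :
    contraction R B C n (rTensor C (coface n 0).toLinearMap y) = y := by
  rcases n with _ | n
  · exact (congrArg _ (mul'_rTensor_linearMap_apply B C y)).trans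
      (LinearEquiv.symm_apply_apply _ _)
  · induction y with
    | zero => simp
    | add a b ha hb => simp only [map_add, ha, hb]
    | tmul x c => exact congrArg (x ⊗ₜ[B] ·) (one_mul c)

theorem contraction_rTensor_coface_succ (n j : ℕ) (y : tensorPow R B C (n + 1) ⊗[B] C) :
    contraction R B C (n + 1) (rTensor C (coface (n + 1) (j + 1)).toLinearMap y) =
      rTensor C (coface n j).toLinearMap (contraction R B C n y) := by
  rcases n with _ | n
  · induction y with
    | zero => simp
    | add a b ha hb => simp only [map_add, ha, hb]
    | tmul c₀ c =>
      change (1 : C) ⊗ₜ[B] ((show C from c₀) * c) = algebraMap B C 1 ⊗ₜ[B] ((show C from c₀) * c)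
      rw [map_one]
  · have key : contraction R B C (n + 2) ∘ₗ rTensor C (coface (n + 2) (j + 1)).toLinearMap =
        rTensor C (coface (n + 1) j).toLinearMap ∘ₗ contraction R B C (n + 1) :=
      TensorProduct.ext_threefold fun _ _ _ => rfl
    exact LinearMap.congr_fun key y

theorem rTensor_diff_apply (n : ℕ) (y : tensorPow R B C n ⊗[B] C) :
    rTensor C (diff R B C n) y =
      ∑ i ∈ range (n + 1), (-1 : ℤ) ^ i • rTensor C (coface n i).toLinearMap y := by
  simp only [diff, ← coe_rTensorHom, map_sum, map_zsmul, LinearMap.sum_apply,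
    LinearMap.smul_apply]

theorem contraction_rTensor_diff_add (n : ℕ) (y : tensorPow R B C (n + 1) ⊗[B] C) :
    contraction R B C (n + 1) (rTensor C (diff R B C (n + 1)) y) +
      rTensor C (diff R B C n) (contraction R B C n y) = y := by
  rw [rTensor_diff_apply, rTensor_diff_apply, map_sum, sum_range_succ']
  simp only [map_zsmul]
  simp only [contraction_rTensor_coface_succ, contraction_rTensor_coface_zero, pow_succ,
    mul_neg_one, neg_smul, sum_neg_distrib, pow_zero, one_smul]
  abel

theorem exact_rTensor_diff (n : ℕ) :
    Function.Exact (rTensor C (diff R B C n)) (rTensor C (diff R B C (n + 1))) :=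
  exact_of_comp_of_mem_range (by rw [← rTensor_comp, diff_comp_diff, rTensor_zero])
    fun y hy => ⟨contraction R B C n y, by simpa [hy] using contraction_rTensor_diff_add n y⟩

theorem exact_diff [Module.FaithfullyFlat B C] (n : ℕ) :
    Function.Exact (diff R B C n) (diff R B C (n + 1)) :=
  Module.FaithfullyFlat.rTensor_reflects_exact B C _ _ (exact_rTensor_diff n)

theorem diff_zero_injective [Module.FaithfullyFlat B C] :
    Function.Injective (diff R B C 0) := by
  rw [diff_zero]
  exact FaithfulSMul.algebraMap_injective B C

end Contraction

end Amitsur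

section DiagramChase

/- A ladder of rows `X`, `Y`, `Z` (differentials `dX`, `dY`, `dZ`) whose columns
`0 → Xₙ → Yₙ → Zₙ → 0` are exact; `RX`, `RY`, `RZ` stand for the boundaries in degree `1`. -/
variable {X₁ X₂ X₃ Y₁ Y₂ Y₃ Z₁ Z₂ : Type*} [AddCommGroup X₁] [AddCommGroup X₂]
  [AddCommGroup X₃] [AddCommGroup Y₁] [AddCommGroup Y₂] [AddCommGroup Y₃] [AddCommGroup Z₁]
  [AddCommGroup Z₂]
  {i₁ : X₁ →+ Y₁} {i₂ : X₂ →+ Y₂} {i₃ : X₃ →+ Y₃} {p₁ : Y₁ →+ Z₁} {p₂ : Y₂ →+ Z₂}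
  {dX₁ : X₁ →+ X₂} {dX₂ : X₂ →+ X₃} {dY₁ : Y₁ →+ Y₂} {dY₂ : Y₂ →+ Y₃} {dZ : Z₁ →+ Z₂}
  {RX : AddSubgroup X₁} {RY : AddSubgroup Y₁} {RZ : AddSubgroup Z₁}

open AddMonoidHom

theorem ker_le_middle_of_ker_le_sides (hi : ∀ x, i₂ (dX₁ x) = dY₁ (i₁ x))
    (hp : ∀ y, p₂ (dY₁ y) = dZ (p₁ y)) (h₁ : Function.Exact i₁ p₁) (hi₂ : Function.Injective i₂)
    (hRY : RY ≤ dY₁.ker) (hRXY : RX.map i₁ ≤ RY) (hRZY : RZ ≤ RY.map p₁)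
    (hX : dX₁.ker ≤ RX) (hZ : dZ.ker ≤ RZ) : dY₁.ker ≤ RY := by
  intro y hy
  rw [mem_ker] at hy
  obtain ⟨r, hr, hpr⟩ := hRZY (hZ (show dZ (p₁ y) = 0 by rw [← hp, hy, map_zero]))
  obtain ⟨x, hx⟩ := (h₁ (y - r)).mp (by rw [map_sub, hpr, sub_self])
  have hdx : dX₁ x = 0 := hi₂ <| by rw [hi, hx, map_sub, hy, hRY hr, sub_self, map_zero]
  simpa using RY.add_mem hr (hRXY ⟨x, hX hdx, hx⟩)

theorem ker_le_right_of_ker_le_left_middle (hi₁ : ∀ x, i₂ (dX₁ x) = dY₁ (i₁ x))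
    (hi₂ : ∀ x, i₃ (dX₂ x) = dY₂ (i₂ x)) (hp : ∀ y, p₂ (dY₁ y) = dZ (p₁ y))
    (h₁ : Function.Exact i₁ p₁) (h₂ : Function.Exact i₂ p₂) (hp₁ : Function.Surjective p₁)
    (hi₃ : Function.Injective i₃) (hdY : ∀ y, dY₂ (dY₁ y) = 0) (hRZ : RY.map p₁ ≤ RZ)
    (hX : dX₂.ker ≤ dX₁.range) (hY : dY₁.ker ≤ RY) : dZ.ker ≤ RZ := by
  intro z hz
  obtain ⟨y, rfl⟩ := hp₁ z
  obtain ⟨w, hw⟩ := (h₂ (dY₁ y)).mp (by rw [hp]; exact hz)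
  obtain ⟨v, hv⟩ := hX (show dX₂ w = 0 from hi₃ <| by rw [hi₂, hw, hdY, map_zero])
  have hyv : y - i₁ v ∈ RY := hY <| by rw [mem_ker, map_sub, ← hi₁, hv, hw, sub_self]
  exact hRZ ⟨_, hyv, by rw [map_sub, h₁.apply_apply_eq_zero, sub_zero]⟩

end DiagramChase

section AmitsurComplex

open Amitsur

variable {k} {F G : AbFunctor k} (B C : Type u) [CommRing B] [Algebra k B] [CommRing C]
  [Algebra k C] [Algebra B C] [IsScalarTower k B C]

namespace AbFunctor

noncomputable def amitsurDiff (F : AbFunctor k) (n : ℕ) :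
    F.obj (tensorPow k B C n) →+ F.obj (tensorPow k B C (n + 1)) :=
  ∑ i ∈ range (n + 1), (-1 : ℤ) ^ i • F.map ((coface n i).restrictScalars k)

/-- The image of the incoming differential; the complex is augmented by `0` in degree `-1`, so
exactness in degree `0` is injectivity of `F(B) → F(C)`. -/
noncomputable def amitsurBoundaries (F : AbFunctor k) :
    (n : ℕ) → AddSubgroup (F.obj (tensorPow k B C n))
  | 0 => ⊥
  | n + 1 => (F.amitsurDiff B C n).range

def AmitsurExactAt (F : AbFunctor k) (n : ℕ) : Prop :=
  (F.amitsurDiff B C n).ker ≤ F.amitsurBoundaries B C n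

variable {B C}

theorem amitsurDiff_apply (n : ℕ) (x : F.obj (tensorPow k B C n)) :
    F.amitsurDiff B C n x =
      ∑ i ∈ range (n + 1), (-1 : ℤ) ^ i • F.map ((coface n i).restrictScalars k) x := by
  simp [amitsurDiff]

theorem amitsurDiff_zero : F.amitsurDiff B C 0 = F.map (IsScalarTower.toAlgHom k B C) := by
  simp [amitsurDiff]
  rfl

theorem amitsurDiff_one_apply (x : F.obj (tensorPow k B C 1)) :
    F.amitsurDiff B C 1 x =
      F.map (tensorIncl₂ k (B := B) (C := C)) x - F.map (tensorIncl₁ k (B := B) (C := C)) x := by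
  simp only [amitsurDiff_apply, sum_range_succ, sum_range_zero, pow_zero, pow_one, one_smul,
    neg_smul, zero_add, ← sub_eq_add_neg]
  rfl

theorem amitsurDiff_amitsurDiff (n : ℕ) (x : F.obj (tensorPow k B C n)) :
    F.amitsurDiff B C (n + 1) (F.amitsurDiff B C n x) = 0 := by
  simp only [amitsurDiff_apply, map_sum, map_zsmul, smul_sum, smul_smul, ← pow_add]
  rw [sum_comm]
  refine sum_range_sum_range_neg_one_pow_smul_eq_zero n _ fun i j hij hjn => ?_
  simp only [← AddMonoidHom.comp_apply, ← F.map_comp]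
  exact congrArg (fun f => F.map (AlgHom.restrictScalars k f) x) (coface_comp_coface hij hjn)

theorem amitsurBoundaries_le_ker (n : ℕ) :
    F.amitsurBoundaries B C n ≤ (F.amitsurDiff B C n).ker := by
  rcases n with _ | n
  · exact bot_le
  · rintro _ ⟨x, rfl⟩
    exact amitsurDiff_amitsurDiff n x

theorem Ga_amitsurDiff_apply (ι : Type u) (n : ℕ) (x : (Ga k ι).obj (tensorPow k B C n)) :
    (Ga k ι).amitsurDiff B C n x =
      Finsupp.mapRange (diff k B C n) (map_zero _) (show ι →₀ tensorPow k B C n from x) := by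
  rw [amitsurDiff_apply]
  change ι →₀ tensorPow k B C n at x
  refine Finsupp.ext fun c => ?_
  change (∑ i ∈ range (n + 1), (-1 : ℤ) ^ i • Finsupp.mapRange (coface n i) (map_zero _) x) c = _
  simp [diff_apply]

theorem Ga_amitsurExactAt [Module.FaithfullyFlat B C] (ι : Type u) (n : ℕ) :
    (Ga k ι).AmitsurExactAt B C n := by
  intro x hx
  rw [AddMonoidHom.mem_ker, Ga_amitsurDiff_apply] at hx
  change ι →₀ tensorPow k B C n at x
  replace hx : Finsupp.mapRange (diff k B C n) (map_zero _) x = 0 := hx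
  rcases n with _ | n
  · exact AddSubgroup.mem_bot.mpr <| Finsupp.mapRange_injective _ _ diff_zero_injective
      (hx.trans Finsupp.mapRange_zero.symm)
  · obtain ⟨y, rfl⟩ : x ∈ Set.range (Finsupp.mapRange (diff k B C n) (map_zero _)) := by
      rw [Finsupp.range_mapRange]
      exact fun c => (exact_diff n (x c)).mp (by simpa using DFunLike.congr_fun hx c)
    exact ⟨y, Ga_amitsurDiff_apply ι n y⟩

end AbFunctor

open AbFunctor

namespace AbHom

theorem app_amitsurDiff (φ : AbHom k F G) (n : ℕ) (x : F.obj (tensorPow k B C n)) :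
    φ.app _ (F.amitsurDiff B C n x) = G.amitsurDiff B C n (φ.app _ x) := by
  simp only [amitsurDiff_apply, map_sum, map_zsmul, φ.naturality]

theorem map_amitsurBoundaries_le (φ : AbHom k F G) (n : ℕ) :
    (F.amitsurBoundaries B C n).map (φ.app _) ≤ G.amitsurBoundaries B C n := by
  rcases n with _ | n
  · simp [amitsurBoundaries]
  · rintro _ ⟨_, ⟨x, rfl⟩, rfl⟩
    exact ⟨φ.app _ x, (φ.app_amitsurDiff B C n x).symm⟩

theorem amitsurBoundaries_le_map (φ : AbHom k F G)
    (hφ : ∀ (D : Type u) [CommRing D] [Algebra k D], Function.Surjective (φ.app D)) (n : ℕ) :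
    G.amitsurBoundaries B C n ≤ (F.amitsurBoundaries B C n).map (φ.app _) := by
  rcases n with _ | n
  · exact bot_le
  · rintro _ ⟨y, rfl⟩
    obtain ⟨x, rfl⟩ := hφ _ y
    exact ⟨_, ⟨x, rfl⟩, φ.app_amitsurDiff B C n x⟩

end AbHom

variable {B C}

theorem AbIso.amitsurExactAt (e : AbIso k F G) {n : ℕ} (h : G.AmitsurExactAt B C n) :
    F.AmitsurExactAt B C n := by
  intro x hx
  have hex : e.hom.app _ x ∈ (G.amitsurDiff B C n).ker := by
    rw [AddMonoidHom.mem_ker, ← e.hom.app_amitsurDiff B C n x, hx, map_zero]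
  exact e.inv.map_amitsurBoundaries_le B C n ⟨_, h hex, e.hom_inv _ x⟩

namespace IsShortExact

variable {F' F'' : AbFunctor k} {i : AbHom k F' F} {p : AbHom k F F''}

theorem amitsurExactAt_middle (hse : IsShortExact k i p) {n : ℕ}
    (h' : F'.AmitsurExactAt B C n) (h'' : F''.AmitsurExactAt B C n) :
    F.AmitsurExactAt B C n :=
  ker_le_middle_of_ker_le_sides (i.app_amitsurDiff B C n) (p.app_amitsurDiff B C n)
    (hse.exact _) (hse.inj _) (amitsurBoundaries_le_ker n) (i.map_amitsurBoundaries_le B C n)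
    (p.amitsurBoundaries_le_map B C hse.surj n) h' h''

theorem amitsurExactAt_right (hse : IsShortExact k i p) {n : ℕ}
    (h' : F'.AmitsurExactAt B C (n + 1)) (h : F.AmitsurExactAt B C n) :
    F''.AmitsurExactAt B C n :=
  ker_le_right_of_ker_le_left_middle (i.app_amitsurDiff B C n) (i.app_amitsurDiff B C (n + 1))
    (p.app_amitsurDiff B C n) (hse.exact _) (hse.exact _) (hse.surj _) (hse.inj _)
    (amitsurDiff_amitsurDiff n) (p.map_amitsurBoundaries_le B C n) h' h

end IsShortExact

end AmitsurComplex

section IsAmitsurExact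

variable {k} {F G : AbFunctor k}

def AbFunctor.IsAmitsurExact (F : AbFunctor k) : Prop :=
  ∀ (B C : Type u) [CommRing B] [Algebra k B] [CommRing C] [Algebra k C] [Algebra B C]
    [IsScalarTower k B C] [Module.FaithfullyFlat B C] (n : ℕ), F.AmitsurExactAt B C n

open AbFunctor

theorem AbFunctor.Ga_isAmitsurExact (ι : Type u) : (Ga k ι).IsAmitsurExact :=
  fun _ _ _ _ _ _ _ _ _ n => Ga_amitsurExactAt ι n

theorem AbIso.isAmitsurExact (e : AbIso k F G) (hG : G.IsAmitsurExact) : F.IsAmitsurExact :=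
  fun B C _ _ _ _ _ _ _ n => e.amitsurExactAt (hG B C n)

theorem IsStrictlyAdditive.isAmitsurExact (hF : IsStrictlyAdditive k F) : F.IsAmitsurExact := by
  obtain ⟨_, ⟨e⟩⟩ | ⟨⟨e⟩⟩ := hF
  · exact e.isAmitsurExact (Ga_isAmitsurExact _)
  · exact e.isAmitsurExact (Ga_isAmitsurExact _)

theorem IsAdditive.isAmitsurExact (hF : IsAdditive k F) : F.IsAmitsurExact := by
  induction hF with
  | of_strict F hF => exact hF.isAmitsurExact
  | of_ext i p hse _ hF'' ih =>
    exact fun B C _ _ _ _ _ _ _ n =>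
      hse.amitsurExactAt_middle (ih B C n) (hF''.isAmitsurExact B C n)

theorem IsPseudoadditive.isAmitsurExact (hP : IsPseudoadditive k F) : F.IsAmitsurExact := by
  induction hP with
  | of_additive P hP => exact hP.isAmitsurExact
  | of_ext i p hse _ hU ih =>
    exact fun B C _ _ _ _ _ _ _ n =>
      hse.amitsurExactAt_right (ih B C (n + 1)) (hU.isAmitsurExact B C n)

theorem AbFunctor.IsAmitsurExact.isFpqcSheaf (hF : F.IsAmitsurExact) : IsFpqcSheaf k F := by
  intro B C _ _ _ _ _ _ _
  have hinj : (F.amitsurDiff B C 0).ker ≤ ⊥ := hF B C 0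
  have hexact : (F.amitsurDiff B C 1).ker ≤ (F.amitsurDiff B C 0).range := hF B C 1
  have hcomplex : (F.amitsurDiff B C 0).range ≤ (F.amitsurDiff B C 1).ker :=
    amitsurBoundaries_le_ker 1
  rw [amitsurDiff_zero] at hinj hexact hcomplex
  have hker : ∀ x, x ∈ (F.amitsurDiff B C 1).ker ↔
      F.map (tensorIncl₁ k (B := B) (C := C)) x = F.map (tensorIncl₂ k (B := B) (C := C)) x :=
    fun x => by
      rw [AddMonoidHom.mem_ker, amitsurDiff_one_apply]
      exact sub_eq_zero.trans eq_comm
  exact ⟨(AddMonoidHom.ker_eq_bot_iff _).mp (le_bot_iff.mp hinj),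
    Set.ext fun x => ⟨fun hx => (hker x).mp (hcomplex hx), fun hx => hexact ((hker x).mpr hx)⟩⟩

end IsAmitsurExact

/-- A pseudoadditive functor is a sheaf for the fpqc topology. -/
theorem pseudoadditive_isFpqcSheaf {k : Type u} [Field k] {P : AbFunctor k}
    (hP : IsPseudoadditive k P) : IsFpqcSheaf k P :=
  hP.isAmitsurExact.isFpqcSheaf
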